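/- arXiv:2307.01517 — 2 statements merged into one kernel-verified Lean document; each statement's English description precedes it below -/
import Mathlib

section
/- Let g, h₁, …, h_M be independent Exp(1) random variables, P0 = Ps = P, R0, Rs > 0, α0 = (2^{R0}−1)/P, and τ(g) = max{0, P·g/(2^{R0}−1) − 1}. Define the HSIC-PA achievable rate of user m as R^m = log₂(1 + P·h_m) if P·h_m ≤ τ(g), and R^m = max{ log₂(1 + P·h_m/(P·g + 1)), log₂(1 + τ(g)) } if P·h_m > τ(g). Then the outage probability P(max_{1≤m≤M} R^m < Rs) tends to 0 as P → ∞, for all values of R0 and Rs. -/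
open MeasureTheory ProbabilityTheory Real Filter

/-- The HSIC-PA scheme avoids the outage probability error floor: the outage
probability of the served secondary user tends to `0` as `P → ∞`, for all
target rates `R0, Rs > 0`. -/
theorem hsic_pa_no_error_floor
    {Ω : Type*} [MeasureSpace Ω] [IsProbabilityMeasure (ℙ : Measure Ω)]
    (M : ℕ) (hM : 1 ≤ M) (g : Ω → ℝ) (h : Fin M → Ω → ℝ)
    (hmeas : ∀ i : Fin (M + 1), Measurable ((Fin.cons g h : Fin (M + 1) → Ω → ℝ) i))
    (hindep : iIndepFun (Fin.cons g h : Fin (M + 1) → Ω → ℝ) ℙ)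
    (hcdf : ∀ i : Fin (M + 1), ∀ t : ℝ, 0 ≤ t →
      ℙ {ω | (Fin.cons g h : Fin (M + 1) → Ω → ℝ) i ω ≤ t} = ENNReal.ofReal (1 - Real.exp (-t)))
    (R0 Rs : ℝ) (hR0 : 0 < R0) (hRs : 0 < Rs) :
    Filter.Tendsto
      (fun P : ℝ => ℙ {ω | ∀ m : Fin M,
        (if P * h m ω ≤ max 0 (P * g ω / ((2 : ℝ) ^ R0 - 1) - 1) then
            Real.logb 2 (1 + P * h m ω)
          else
            max (Real.logb 2 (1 + P * h m ω / (P * g ω + 1)))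
              (Real.logb 2 (1 + max 0 (P * g ω / ((2 : ℝ) ^ R0 - 1) - 1)))) < Rs})
      Filter.atTop (nhds 0) := by
  rw [ENNReal.tendsto_nhds_zero]
  intro ε hε
  -- choose a small δ from ε
  set ε' : ENNReal := min ε 1 with hε'def
  have hε'pos : 0 < ε' := lt_min hε zero_lt_one
  have hε'ne : ε' ≠ ⊤ := ne_top_of_le_ne_top ENNReal.one_ne_top (min_le_right _ _)
  set r : ℝ := ε'.toReal with hrdef
  have hrpos : 0 < r := ENNReal.toReal_pos hε'pos.ne' hε'ne
  set δ : ℝ := r / 4 with hδdef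
  have hδpos : 0 < δ := by positivity
  have hc : (0:ℝ) < (2:ℝ) ^ R0 - 1 := by
    have h1 : (1:ℝ) < (2:ℝ) ^ R0 :=
      (Real.one_lt_rpow_iff_of_pos two_pos).mpr (Or.inl ⟨one_lt_two, hR0⟩)
    linarith
  have hB : (1:ℝ) < (2:ℝ) ^ Rs :=
    (Real.one_lt_rpow_iff_of_pos two_pos).mpr (Or.inl ⟨one_lt_two, hRs⟩)
  set c : ℝ := (2:ℝ) ^ R0 - 1 with hcdef
  set B : ℝ := (2:ℝ) ^ Rs with hBdef
  have hP0pos : (0:ℝ) < B * (c + 1) / δ := by positivity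
  filter_upwards [eventually_ge_atTop (B * (c + 1) / δ)] with P hP
  have hPpos : 0 < P := lt_of_lt_of_le hP0pos hP
  have hPδ : B * (c + 1) ≤ P * δ := (div_le_iff₀ hδpos).mp hP
  set m0 : Fin M := ⟨0, hM⟩ with hm0def
  have hsub : {ω : Ω | ∀ m : Fin M,
        (if P * h m ω ≤ max 0 (P * g ω / ((2 : ℝ) ^ R0 - 1) - 1) then
            Real.logb 2 (1 + P * h m ω)
          else
            max (Real.logb 2 (1 + P * h m ω / (P * g ω + 1)))
              (Real.logb 2 (1 + max 0 (P * g ω / ((2 : ℝ) ^ R0 - 1) - 1)))) < Rs}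
      ⊆ {ω : Ω | g ω < δ} ∪ {ω : Ω | h m0 ω < δ} := by
    intro ω hω
    by_contra hcon
    simp only [Set.mem_union, Set.mem_setOf_eq, not_or, not_lt] at hcon
    obtain ⟨hg, hh⟩ := hcon
    have hω0 := hω m0
    have hPh : P * δ ≤ P * h m0 ω := mul_le_mul_of_nonneg_left hh hPpos.le
    have hkey : Rs ≤
        (if P * h m0 ω ≤ max 0 (P * g ω / ((2 : ℝ) ^ R0 - 1) - 1) then
            Real.logb 2 (1 + P * h m0 ω)
          else
            max (Real.logb 2 (1 + P * h m0 ω / (P * g ω + 1)))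
              (Real.logb 2 (1 + max 0 (P * g ω / ((2 : ℝ) ^ R0 - 1) - 1)))) := by
      by_cases hcase : P * h m0 ω ≤ max 0 (P * g ω / ((2 : ℝ) ^ R0 - 1) - 1)
      · rw [if_pos hcase]
        have hx : (0:ℝ) < 1 + P * h m0 ω := by nlinarith
        rw [Real.le_logb_iff_rpow_le one_lt_two hx]
        nlinarith
      · rw [if_neg hcase]
        refine le_trans ?_ (le_max_right _ _)
        have hτ : P * g ω / c - 1 ≤ max 0 (P * g ω / c - 1) := le_max_right _ _
        have hPg : P * δ ≤ P * g ω := mul_le_mul_of_nonneg_left hg hPpos.le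
        have hdiv : B ≤ P * g ω / c := by
          rw [le_div_iff₀ hc]
          nlinarith
        have hx : (0:ℝ) < 1 + max 0 (P * g ω / c - 1) := by
          have := le_max_left (0:ℝ) (P * g ω / c - 1)
          linarith
        rw [Real.le_logb_iff_rpow_le one_lt_two hx]
        have : B - 1 ≤ max 0 (P * g ω / c - 1) := le_trans (by linarith) hτ
        linarith
    exact absurd hω0 (not_lt.mpr hkey)
  have hg_le : ℙ {ω : Ω | g ω < δ} ≤ ENNReal.ofReal δ := by
    calc ℙ {ω : Ω | g ω < δ} ≤ ℙ {ω : Ω | g ω ≤ δ} :=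
          measure_mono (Set.setOf_subset_setOf.mpr fun ω hω => le_of_lt hω)
      _ = ENNReal.ofReal (1 - Real.exp (-δ)) := by
          have := hcdf 0 δ hδpos.le
          simpa [Fin.cons_zero] using this
      _ ≤ ENNReal.ofReal δ := by
          apply ENNReal.ofReal_le_ofReal
          have := Real.add_one_le_exp (-δ)
          linarith
  have hh_le : ℙ {ω : Ω | h m0 ω < δ} ≤ ENNReal.ofReal δ := by
    calc ℙ {ω : Ω | h m0 ω < δ} ≤ ℙ {ω : Ω | h m0 ω ≤ δ} :=
          measure_mono (Set.setOf_subset_setOf.mpr fun ω hω => le_of_lt hω)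
      _ = ENNReal.ofReal (1 - Real.exp (-δ)) := by
          have := hcdf m0.succ δ hδpos.le
          simpa [Fin.cons_succ] using this
      _ ≤ ENNReal.ofReal δ := by
          apply ENNReal.ofReal_le_ofReal
          have := Real.add_one_le_exp (-δ)
          linarith
  calc ℙ {ω : Ω | ∀ m : Fin M,
        (if P * h m ω ≤ max 0 (P * g ω / ((2 : ℝ) ^ R0 - 1) - 1) then
            Real.logb 2 (1 + P * h m ω)
          else
            max (Real.logb 2 (1 + P * h m ω / (P * g ω + 1)))
              (Real.logb 2 (1 + max 0 (P * g ω / ((2 : ℝ) ^ R0 - 1) - 1)))) < Rs}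
      ≤ ℙ ({ω : Ω | g ω < δ} ∪ {ω : Ω | h m0 ω < δ}) := measure_mono hsub
    _ ≤ ℙ {ω : Ω | g ω < δ} + ℙ {ω : Ω | h m0 ω < δ} := measure_union_le _ _
    _ ≤ ENNReal.ofReal δ + ENNReal.ofReal δ := add_le_add hg_le hh_le
    _ = ENNReal.ofReal (r / 2) := by
        rw [← ENNReal.ofReal_add hδpos.le hδpos.le]
        norm_num [hδdef]
        ring_nf
    _ ≤ ENNReal.ofReal r := ENNReal.ofReal_le_ofReal (by linarith)
    _ = ε' := ENNReal.ofReal_toReal hε'ne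
    _ ≤ ε := min_le_left _ _
end

section
/- Let g, h₁, …, h_M be independent Exp(1) random variables, P0 = Ps = P, R0, Rs > 0, and τ(g) = max{0, P·g/(2^{R0}−1) − 1}. Define the FSIC-PA achievable rate of user m as R̂^m = log₂(1 + P·h_m) if P·h_m ≤ τ(g), and R̂^m = log₂(1 + τ(g)) if P·h_m > τ(g). Then the outage probability P(max_{1≤m≤M} R̂^m < Rs) tends to 0 as P → ∞, for all values of R0 and Rs. -/
open MeasureTheory ProbabilityTheory Real Filter

/-- The FSIC-PA scheme avoids the outage probability error floor: the outage
probability of the served secondary user tends to `0` as `P → ∞`, for all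
target rates `R0, Rs > 0`. -/
theorem fsic_pa_no_error_floor
    {Ω : Type*} [MeasureSpace Ω] [IsProbabilityMeasure (ℙ : Measure Ω)]
    (M : ℕ) (hM : 1 ≤ M) (g : Ω → ℝ) (h : Fin M → Ω → ℝ)
    (hmeas : ∀ i : Fin (M + 1), Measurable ((Fin.cons g h : Fin (M + 1) → Ω → ℝ) i))
    (hindep : iIndepFun (Fin.cons g h : Fin (M + 1) → Ω → ℝ) ℙ)
    (hcdf : ∀ i : Fin (M + 1), ∀ t : ℝ, 0 ≤ t →
      ℙ {ω | (Fin.cons g h : Fin (M + 1) → Ω → ℝ) i ω ≤ t} = ENNReal.ofReal (1 - Real.exp (-t)))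
    (R0 Rs : ℝ) (hR0 : 0 < R0) (hRs : 0 < Rs) :
    Filter.Tendsto
      (fun P : ℝ => ℙ {ω | ∀ m : Fin M,
        (if P * h m ω ≤ max 0 (P * g ω / ((2 : ℝ) ^ R0 - 1) - 1) then
            Real.logb 2 (1 + P * h m ω)
          else
            Real.logb 2 (1 + max 0 (P * g ω / ((2 : ℝ) ^ R0 - 1) - 1))) < Rs})
      Filter.atTop (nhds 0) := by
  have hc : (0:ℝ) < (2 : ℝ) ^ R0 - 1 := by
    have : (1:ℝ) < (2:ℝ) ^ R0 :=
      (Real.one_lt_rpow_iff_of_pos (by norm_num)).mpr (Or.inl ⟨one_lt_two, hR0⟩)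
    linarith
  set c : ℝ := (2:ℝ) ^ R0 - 1 with hcdef
  set r : ℝ := (2:ℝ) ^ Rs - 1 with hrdef
  have hr : 0 < r := by
    have : (1:ℝ) < (2:ℝ) ^ Rs :=
      (Real.one_lt_rpow_iff_of_pos (by norm_num)).mpr (Or.inl ⟨one_lt_two, hRs⟩)
    simp only [hrdef]; linarith
  have key : ∀ x : ℝ, Real.logb 2 (1 + x) < Rs → x < r := by
    intro x hx
    by_contra hx'
    push_neg at hx'
    have h1 : (2:ℝ) ^ Rs ≤ 1 + x := by simp only [hrdef] at hx'; linarith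
    have h2 : Rs ≤ Real.logb 2 (1 + x) := by
      calc Rs = Real.logb 2 ((2:ℝ) ^ Rs) :=
            (Real.logb_rpow (by norm_num) (by norm_num)).symm
        _ ≤ Real.logb 2 (1 + x) :=
            Real.logb_le_logb_of_le one_lt_two (Real.rpow_pos_of_pos two_pos Rs) h1
    linarith
  -- the bounding function
  have m0 : Fin M := ⟨0, hM⟩
  set u : ℝ → ENNReal := fun P =>
    ENNReal.ofReal (1 - Real.exp (-(r / P))) +
      ENNReal.ofReal (1 - Real.exp (-(c * (r + 1) / P))) with hudef
  have hu : Tendsto u atTop (nhds 0) := by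
    have hdiv : ∀ a : ℝ, Tendsto (fun P : ℝ => a / P) atTop (nhds 0) :=
      fun a => tendsto_const_nhds.div_atTop tendsto_id
    have haux : ∀ a : ℝ, Tendsto (fun P : ℝ => ENNReal.ofReal (1 - Real.exp (-(a / P))))
        atTop (nhds 0) := by
      intro a
      have h1 : Tendsto (fun P : ℝ => 1 - Real.exp (-(a / P))) atTop (nhds 0) := by
        have hn : Tendsto (fun P : ℝ => -(a / P)) atTop (nhds 0) := by
          simpa using (hdiv a).neg
        have := ((Real.continuous_exp.tendsto 0).comp hn).const_sub 1
        simpa using this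
      have := (ENNReal.continuous_ofReal.tendsto 0).comp h1
      simpa [Function.comp_def] using this
    have := (haux r).add (haux (c * (r + 1)))
    simpa using this
  refine tendsto_of_tendsto_of_tendsto_of_le_of_le' tendsto_const_nhds hu
    (Eventually.of_forall fun P => zero_le) ?_
  filter_upwards [eventually_ge_atTop (1:ℝ)] with P hP
  have hP0 : (0:ℝ) < P := lt_of_lt_of_le one_pos hP
  -- event inclusion
  have hsub : {ω | ∀ m : Fin M,
      (if P * h m ω ≤ max 0 (P * g ω / ((2 : ℝ) ^ R0 - 1) - 1) then
          Real.logb 2 (1 + P * h m ω)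
        else
          Real.logb 2 (1 + max 0 (P * g ω / ((2 : ℝ) ^ R0 - 1) - 1))) < Rs} ⊆
      {ω | h m0 ω ≤ r / P} ∪ {ω | g ω ≤ c * (r + 1) / P} := by
    intro ω hω
    have hm := hω m0
    by_cases hif : P * h m0 ω ≤ max 0 (P * g ω / ((2 : ℝ) ^ R0 - 1) - 1)
    · rw [if_pos hif] at hm
      left
      have := key _ hm
      show h m0 ω ≤ r / P
      rw [le_div_iff₀ hP0]
      linarith [mul_comm P (h m0 ω)]
    · rw [if_neg hif] at hm
      right
      have hτ := key _ hm
      have h2 : P * g ω / c - 1 < r := lt_of_le_of_lt (le_max_right _ _) hτ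
      have h3 : P * g ω < c * (r + 1) := by
        have := (div_lt_iff₀ hc).mp (by linarith : P * g ω / c < r + 1)
        linarith
      show g ω ≤ c * (r + 1) / P
      rw [le_div_iff₀ hP0]
      linarith [mul_comm P (g ω)]
  calc ℙ _ ≤ ℙ ({ω | h m0 ω ≤ r / P} ∪ {ω | g ω ≤ c * (r + 1) / P}) := measure_mono hsub
    _ ≤ ℙ {ω | h m0 ω ≤ r / P} + ℙ {ω | g ω ≤ c * (r + 1) / P} := measure_union_le _ _
    _ = u P := by
        have e1 : ℙ {ω | h m0 ω ≤ r / P} = ENNReal.ofReal (1 - Real.exp (-(r / P))) := by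
          have := hcdf m0.succ (r / P) (div_nonneg hr.le hP0.le)
          simpa [Fin.cons_succ] using this
        have e2 : ℙ {ω | g ω ≤ c * (r + 1) / P} =
            ENNReal.ofReal (1 - Real.exp (-(c * (r + 1) / P))) := by
          have := hcdf 0 (c * (r + 1) / P)
            (div_nonneg (mul_nonneg hc.le (by linarith)) hP0.le)
          simpa [Fin.cons_zero] using this
        rw [e1, e2]
end
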